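/- arXiv:2004.08666 — 9 statements merged into one kernel-verified Lean document; each statement's English description precedes it below -/
import Mathlib

section
/- The projection of a point y ∈ ℝⁿ onto the probability simplex {x ∈ ℝⁿ : x ≥ 0, ∑ᵢ xᵢ = 1} (i.e., the minimizer of ½‖x − y‖² over the simplex) has the form x*ᵢ = max(yᵢ − μ*, 0) for some real number μ*. -/
/-!
Moving a small amount of mass `t` from a coordinate `i` with `x i > 0` to any coordinate `j`
stays in the simplex and changes `‖x - y‖²` by `-2t((x i - y i) - (x j - y j)) + 2t²`.
At the minimizer this must be nonnegative for all small `t > 0`, so `x i - y i ≤ x j - y j`: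
the value `μ = y i - x i` is the same for every coordinate in the support, and bounds
`y j - x j` from above on all others. With `x ≥ 0` this is exactly `x = max (y - μ) 0`.
-/

open scoped RealInnerProductSpace

lemma exists_eq_max_sub_of_sub_le_sub {ι : Type*} {x y : ι → ℝ} (hx : ∀ i, 0 ≤ x i)
    (hle : ∀ i, 0 < x i → ∀ j, x i - y i ≤ x j - y j) {i₀ : ι} (hi₀ : 0 < x i₀) :
    ∃ μ : ℝ, ∀ i, x i = max (y i - μ) 0 := by
  refine ⟨y i₀ - x i₀, fun i => ?_⟩
  have hi₀i := hle i₀ hi₀ i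
  rcases (hx i).eq_or_lt with hzero | hpos
  · rw [← hzero, max_eq_right (by linarith)]
  · have hii₀ := hle i hpos i₀
    rw [max_eq_left (by linarith)]
    linarith

namespace EuclideanSpace

variable {ι : Type*} [Fintype ι]

def probabilitySimplex (ι : Type*) [Fintype ι] : Set (EuclideanSpace ℝ ι) :=
  {x | (∀ i, 0 ≤ x i) ∧ ∑ i, x i = 1}

lemma exists_pos_of_mem_probabilitySimplex {x : EuclideanSpace ℝ ι}
    (hx : x ∈ probabilitySimplex ι) : ∃ i, 0 < x i := by
  have hsum : ∑ _i : ι, (0 : ℝ) < ∑ i, x i := by simp [hx.2]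
  obtain ⟨i, -, hi⟩ := Finset.exists_lt_of_sum_lt hsum
  exact ⟨i, hi⟩

variable [DecidableEq ι]

noncomputable def transfer (i j : ι) : EuclideanSpace ℝ ι :=
  single j 1 - single i 1

omit [Fintype ι] in
lemma transfer_apply (i j k : ι) :
    transfer i j k = (if k = j then 1 else 0) - (if k = i then 1 else 0) := by
  simp [transfer, PiLp.single_apply]

lemma inner_transfer (v : EuclideanSpace ℝ ι) (i j : ι) : ⟪v, transfer i j⟫ = v j - v i := by
  simp [transfer, inner_sub_right, inner_single_right]

lemma norm_transfer_sq {i j : ι} (hij : i ≠ j) : ‖transfer i j‖ ^ 2 = 2 := by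
  rw [transfer, norm_sub_sq_real, inner_single_right]
  simp [hij]
  norm_num

lemma add_smul_transfer_mem_probabilitySimplex {x : EuclideanSpace ℝ ι}
    (hx : x ∈ probabilitySimplex ι) {i : ι} (j : ι) {t : ℝ} (ht : 0 ≤ t) (hti : t ≤ x i) :
    x + t • transfer i j ∈ probabilitySimplex ι := by
  obtain ⟨hnonneg, hsum⟩ := hx
  refine ⟨fun k => ?_, ?_⟩
  · simp only [PiLp.add_apply, PiLp.smul_apply, transfer_apply, smul_eq_mul]
    have := hnonneg k
    split_ifs <;> subst_vars <;> nlinarith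
  · simp [transfer_apply, Finset.sum_add_distrib, mul_sub, hsum]

lemma norm_add_smul_transfer_sub_sq (x y : EuclideanSpace ℝ ι) {i j : ι} (hij : i ≠ j) (t : ℝ) :
    ‖x + t • transfer i j - y‖ ^ 2
      = ‖x - y‖ ^ 2 - 2 * t * ((x i - y i) - (x j - y j)) + 2 * t ^ 2 := by
  rw [add_sub_right_comm, norm_add_sq_real, inner_smul_right, inner_transfer, norm_smul,
    mul_pow, norm_transfer_sq hij, Real.norm_eq_abs, sq_abs]
  simp only [PiLp.sub_apply]
  ring

lemma sub_le_sub_of_isMinOn_probabilitySimplex {x y : EuclideanSpace ℝ ι}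
    (hx : x ∈ probabilitySimplex ι)
    (hmin : IsMinOn (fun z => ‖z - y‖ ^ 2) (probabilitySimplex ι) x)
    {i : ι} (hi : 0 < x i) (j : ι) : x i - y i ≤ x j - y j := by
  obtain rfl | hij := eq_or_ne i j
  · rfl
  by_contra! hlt
  set c := (x i - y i) - (x j - y j)
  have hc : 0 < c := sub_pos.mpr hlt
  set t := min (x i) (c / 2)
  have ht : 0 < t := lt_min hi (half_pos hc)
  have hle : ‖x - y‖ ^ 2 ≤ ‖x + t • transfer i j - y‖ ^ 2 :=
    hmin (add_smul_transfer_mem_probabilitySimplex hx j ht.le (min_le_left _ _))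
  rw [norm_add_smul_transfer_sub_sq x y hij t] at hle
  nlinarith [min_le_right (x i) (c / 2)]

end EuclideanSpace

theorem simplex_projection_form_general (n : ℕ)
    (y xstar : EuclideanSpace ℝ (Fin n))
    (hmem : (∀ i, 0 ≤ xstar i) ∧ ∑ i, xstar i = 1)
    (hmin : IsMinOn (fun x => (1/2) * ‖x - y‖^2)
      {x : EuclideanSpace ℝ (Fin n) | (∀ i, 0 ≤ x i) ∧ ∑ i, x i = 1} xstar) :
    ∃ μ : ℝ, ∀ i, xstar i = max (y i - μ) 0 := by
  have hmin' :
      IsMinOn (fun z => ‖z - y‖ ^ 2) (EuclideanSpace.probabilitySimplex (Fin n)) xstar :=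
    isMinOn_iff.mpr fun z hz => by linarith [isMinOn_iff.mp hmin z hz]
  obtain ⟨i₀, hi₀⟩ := EuclideanSpace.exists_pos_of_mem_probabilitySimplex hmem
  exact exists_eq_max_sub_of_sub_le_sub hmem.1
    (fun i hi => EuclideanSpace.sub_le_sub_of_isMinOn_probabilitySimplex hmem hmin' hi) hi₀

theorem simplex_projection_form (n : ℕ) (hn : 1 ≤ n)
    (y xstar : EuclideanSpace ℝ (Fin n))
    (hmem : (∀ i, 0 ≤ xstar i) ∧ ∑ i, xstar i = 1)
    (hmin : IsMinOn (fun x => (1/2) * ‖x - y‖^2)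
      {x : EuclideanSpace ℝ (Fin n) | (∀ i, 0 ≤ x i) ∧ ∑ i, x i = 1} xstar) :
    ∃ μ : ℝ, ∀ i, xstar i = max (y i - μ) 0 :=
  simplex_projection_form_general n y xstar hmem hmin
end

section
/- If μ* ∈ ℝ satisfies ∑ᵢ max(yᵢ − μ*, 0) = 1, then x* defined by x*ᵢ = max(yᵢ − μ*, 0) is the unique minimizer of ½‖x − y‖² over the probability simplex {x : x ≥ 0, ∑ᵢ xᵢ = 1}. -/
/-! The point `x*` satisfies the variational inequality `⟪z - x*, x* - y⟫ ≥ 0` for every `z` in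
the simplex: coordinatewise, `x*ᵢ - yᵢ + μ = max (μ - yᵢ) 0` is nonnegative and vanishes where
`x*ᵢ > 0` (complementary slackness), and the `μ`-terms cancel because `z` and `x*` have the same
sum. The Pythagorean expansion of `‖z - y‖²` then gives strict inequality for `z ≠ x*`. -/

open scoped RealInnerProductSpace

theorem norm_sub_lt_norm_sub_of_inner_nonneg {E : Type*} [NormedAddCommGroup E]
    [InnerProductSpace ℝ E] {x y z : E} (h : 0 ≤ ⟪z - x, x - y⟫) (hne : z ≠ x) :
    ‖x - y‖ < ‖z - y‖ := by
  have hzx : 0 < ‖z - x‖ := norm_pos_iff.mpr (sub_ne_zero.mpr hne)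
  have hexpand : ‖z - y‖ ^ 2 = ‖z - x‖ ^ 2 + 2 * ⟪z - x, x - y⟫ + ‖x - y‖ ^ 2 := by
    rw [← norm_add_sq_real, sub_add_sub_cancel]
  refine lt_of_pow_lt_pow_left₀ 2 (norm_nonneg _) ?_
  nlinarith

theorem mul_sub_le_of_eq_max_sub_zero {a μ x t : ℝ} (hx : x = max (a - μ) 0) (ht : 0 ≤ t) :
    μ * (x - t) ≤ (x - a) * (t - x) := by
  rcases le_total (a - μ) 0 with h | h
  · rw [hx, max_eq_right h]
    nlinarith
  · rw [hx, max_eq_left h]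
    nlinarith

theorem EuclideanSpace.inner_sub_sub_nonneg_of_eq_max_sub_zero {ι : Type*} [Fintype ι]
    {x y z : EuclideanSpace ℝ ι} {μ : ℝ} (hx : ∀ i, x i = max (y i - μ) 0)
    (hz : ∀ i, 0 ≤ z i) (hsum : ∑ i, z i = ∑ i, x i) :
    0 ≤ ⟪z - x, x - y⟫ := by
  calc (0 : ℝ) = μ * ∑ i, (x i - z i) := by rw [Finset.sum_sub_distrib, hsum, sub_self, mul_zero]
    _ = ∑ i, μ * (x i - z i) := Finset.mul_sum _ _ _
    _ ≤ ∑ i, (x i - y i) * (z i - x i) :=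
      Finset.sum_le_sum fun i _ => mul_sub_le_of_eq_max_sub_zero (hx i) (hz i)
    _ = ⟪z - x, x - y⟫ := by
      simp only [PiLp.inner_apply, PiLp.sub_apply, RCLike.inner_apply, conj_trivial]

theorem simplex_projection_unique_minimizer_general (n : ℕ)
    (y : EuclideanSpace ℝ (Fin n)) (μ : ℝ)
    (hμ : ∑ i, max (y i - μ) 0 = 1)
    (xstar : EuclideanSpace ℝ (Fin n))
    (hx : ∀ i, xstar i = max (y i - μ) 0) :
    ((∀ i, 0 ≤ xstar i) ∧ ∑ i, xstar i = 1) ∧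
    ∀ z : EuclideanSpace ℝ (Fin n),
      ((∀ i, 0 ≤ z i) ∧ ∑ i, z i = 1) → z ≠ xstar →
        (1/2) * ‖xstar - y‖^2 < (1/2) * ‖z - y‖^2 := by
  have hsum : ∑ i, xstar i = 1 := by simpa only [hx] using hμ
  refine ⟨⟨fun i => (hx i).symm ▸ le_max_right _ _, hsum⟩, ?_⟩
  rintro z ⟨hz, hz_sum⟩ hne
  have hvi : 0 ≤ ⟪z - xstar, xstar - y⟫ :=
    EuclideanSpace.inner_sub_sub_nonneg_of_eq_max_sub_zero hx hz (hz_sum.trans hsum.symm)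
  gcongr
  exact norm_sub_lt_norm_sub_of_inner_nonneg hvi hne

theorem simplex_projection_unique_minimizer (n : ℕ) (hn : 1 ≤ n)
    (y : EuclideanSpace ℝ (Fin n)) (μ : ℝ)
    (hμ : ∑ i, max (y i - μ) 0 = 1)
    (xstar : EuclideanSpace ℝ (Fin n))
    (hx : ∀ i, xstar i = max (y i - μ) 0) :
    ((∀ i, 0 ≤ xstar i) ∧ ∑ i, xstar i = 1) ∧
    ∀ z : EuclideanSpace ℝ (Fin n),
      ((∀ i, 0 ≤ z i) ∧ ∑ i, z i = 1) → z ≠ xstar →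
        (1/2) * ‖xstar - y‖^2 < (1/2) * ‖z - y‖^2 :=
  simplex_projection_unique_minimizer_general n y μ hμ xstar hx
end

section
/- Let S = {x ∈ ℝⁿ : u ≤ x ≤ v, Ax = b} be nonempty, let x* minimize cᵀx over S, and for t > 0 let x̂_t be the minimizer of ½‖x + t c‖² over S. Then cᵀ(x̂_t − x*) ≤ 4 R r / t, where R = max_{x ∈ S} ‖x‖ and r is the radius (diameter bound) of S, i.e., ‖x − x'‖ ≤ 2r for all x, x' ∈ S. -/
/-! Expanding the squares, the minimality of `x̂_t` against `x*` gives
`2 t cᵀ(x̂_t − x*) ≤ ‖x*‖² − ‖x̂_t‖² = (‖x*‖ − ‖x̂_t‖)(‖x*‖ + ‖x̂_t‖) ≤ ‖x̂_t − x*‖ · 2R ≤ 4Rr`,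
so in fact `cᵀ(x̂_t − x*) ≤ 2Rr/t`. -/

open scoped RealInnerProductSpace

theorem sq_norm_sub_sq_norm_le_norm_sub_mul {E : Type*} [SeminormedAddCommGroup E] (x y : E) :
    ‖y‖ ^ 2 - ‖x‖ ^ 2 ≤ ‖x - y‖ * (‖x‖ + ‖y‖) := by
  have hdiff : ‖y‖ - ‖x‖ ≤ ‖x - y‖ := by
    rw [norm_sub_rev]
    exact norm_sub_norm_le y x
  calc ‖y‖ ^ 2 - ‖x‖ ^ 2 = (‖y‖ - ‖x‖) * (‖x‖ + ‖y‖) := by ring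
    _ ≤ ‖x - y‖ * (‖x‖ + ‖y‖) := by gcongr

theorem two_mul_inner_sub_le_of_sq_norm_add_smul_le {E : Type*} [NormedAddCommGroup E]
    [InnerProductSpace ℝ E] {x y c : E} {t : ℝ}
    (h : ‖x + t • c‖ ^ 2 ≤ ‖y + t • c‖ ^ 2) :
    2 * t * ⟪c, x - y⟫ ≤ ‖x - y‖ * (‖x‖ + ‖y‖) := by
  have hexpand (z : E) : ‖z + t • c‖ ^ 2 = ‖z‖ ^ 2 + 2 * t * ⟪c, z⟫ + ‖t • c‖ ^ 2 := by
    rw [norm_add_sq_real, real_inner_smul_right, real_inner_comm]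
    ring
  rw [hexpand, hexpand] at h
  rw [inner_sub_right]
  linarith [sq_norm_sub_sq_norm_le_norm_sub_mul x y]

theorem lp_projection_bound_general (n : ℕ)
    (c : EuclideanSpace ℝ (Fin n))
    (S : Set (EuclideanSpace ℝ (Fin n)))
    (R r : ℝ) (hR : ∀ x ∈ S, ‖x‖ ≤ R) (hr : ∀ x ∈ S, ∀ x' ∈ S, ‖x - x'‖ ≤ 2 * r)
    (xstar : EuclideanSpace ℝ (Fin n)) (hxstar : xstar ∈ S)
    (t : ℝ) (ht : 0 < t)
    (xhat : EuclideanSpace ℝ (Fin n)) (hxhat : xhat ∈ S)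
    (hproj : ∀ x ∈ S, (1/2) * ‖xhat + t • c‖^2 ≤ (1/2) * ‖x + t • c‖^2) :
    ⟪c, xhat - xstar⟫ ≤ 4 * R * r / t := by
  have hdist : ‖xhat - xstar‖ ≤ 2 * r := hr xhat hxhat xstar hxstar
  have hnorms : ‖xhat‖ + ‖xstar‖ ≤ 2 * R := by linarith [hR xhat hxhat, hR xstar hxstar]
  have hr0 : 0 ≤ r := by linarith [norm_nonneg (xhat - xstar)]
  have hR0 : 0 ≤ R := (norm_nonneg xhat).trans (hR xhat hxhat)
  have hkey : 2 * t * ⟪c, xhat - xstar⟫ ≤ 2 * r * (2 * R) :=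
    (two_mul_inner_sub_le_of_sq_norm_add_smul_le (by linarith [hproj xstar hxstar])).trans
      (mul_le_mul hdist hnorms (by positivity) (by positivity))
  rw [le_div_iff₀ ht]
  linarith [mul_nonneg hR0 hr0]

theorem lp_projection_bound (n m : ℕ)
    (u v c : EuclideanSpace ℝ (Fin n)) (huv : ∀ i, u i ≤ v i)
    (A : Matrix (Fin m) (Fin n) ℝ) (b : Fin m → ℝ)
    (S : Set (EuclideanSpace ℝ (Fin n)))
    (hS : S = {x : EuclideanSpace ℝ (Fin n) | (∀ i, u i ≤ x i ∧ x i ≤ v i) ∧ A.mulVec (WithLp.ofLp x) = b})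
    (hne : S.Nonempty)
    (R r : ℝ) (hR : ∀ x ∈ S, ‖x‖ ≤ R) (hr : ∀ x ∈ S, ∀ x' ∈ S, ‖x - x'‖ ≤ 2 * r)
    (xstar : EuclideanSpace ℝ (Fin n)) (hxstar : xstar ∈ S)
    (hmin : ∀ x ∈ S, ⟪c, xstar⟫ ≤ ⟪c, x⟫)
    (t : ℝ) (ht : 0 < t)
    (xhat : EuclideanSpace ℝ (Fin n)) (hxhat : xhat ∈ S)
    (hproj : ∀ x ∈ S, (1/2) * ‖xhat + t • c‖^2 ≤ (1/2) * ‖x + t • c‖^2) :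
    ⟪c, xhat - xstar⟫ ≤ 4 * R * r / t :=
  lp_projection_bound_general n c S R r hR hr xstar hxstar t ht xhat hxhat hproj
end

section
/- Let S ⊆ ℝⁿ be a nonempty compact convex set, c ∈ ℝⁿ, x* a minimizer of cᵀx over S, and for t > 0 let x̂_t = argmin_{x ∈ S} ½‖x + t c‖². Then 2t·cᵀ(x̂_t − x*) ≤ −(x̂_t + x*)ᵀ(x̂_t − x*), and consequently cᵀ(x̂_t − x*) ≤ (‖x̂_t‖ + ‖x*‖)·‖x̂_t − x*‖ / (2t). -/
open scoped RealInnerProductSpace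

theorem lp_projection_key_inequality (n : ℕ)
    (S : Set (EuclideanSpace ℝ (Fin n))) (hne : S.Nonempty)
    (hcomp : IsCompact S) (hconv : Convex ℝ S)
    (c : EuclideanSpace ℝ (Fin n))
    (xstar : EuclideanSpace ℝ (Fin n)) (hxstar : xstar ∈ S)
    (hmin : ∀ x ∈ S, ⟪c, xstar⟫ ≤ ⟪c, x⟫)
    (t : ℝ) (ht : 0 < t)
    (xhat : EuclideanSpace ℝ (Fin n)) (hxhat : xhat ∈ S)
    (hproj : ∀ x ∈ S, (1/2) * ‖xhat + t • c‖^2 ≤ (1/2) * ‖x + t • c‖^2) :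
    2 * t * ⟪c, xhat - xstar⟫ ≤ -⟪xhat + xstar, xhat - xstar⟫ ∧
    ⟪c, xhat - xstar⟫ ≤ (‖xhat‖ + ‖xstar‖) * ‖xhat - xstar‖ / (2 * t) := by
  have hA : ‖xhat + t • c‖^2 ≤ ‖xstar + t • c‖^2 := by
    have := hproj xstar hxstar; linarith
  rw [norm_add_sq_real, norm_add_sq_real, real_inner_smul_right,
    real_inner_smul_right] at hA
  have h1 : 2 * t * ⟪c, xhat - xstar⟫ ≤ -⟪xhat + xstar, xhat - xstar⟫ := by
    rw [inner_sub_right, inner_add_left, inner_sub_right, inner_sub_right]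
    have e1 : ⟪xhat, xhat⟫ = ‖xhat‖^2 := real_inner_self_eq_norm_sq xhat
    have e2 : ⟪xstar, xstar⟫ = ‖xstar‖^2 := real_inner_self_eq_norm_sq xstar
    have e3 : ⟪xhat, xstar⟫ = ⟪xstar, xhat⟫ := real_inner_comm _ _
    have e4 : ⟪xhat, c⟫ = ⟪c, xhat⟫ := real_inner_comm _ _
    have e5 : ⟪xstar, c⟫ = ⟪c, xstar⟫ := real_inner_comm _ _
    nlinarith [hA]
  refine ⟨h1, ?_⟩
  have h2 : -⟪xhat + xstar, xhat - xstar⟫ ≤ (‖xhat‖ + ‖xstar‖) * ‖xhat - xstar‖ := by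
    have hcs := abs_real_inner_le_norm (xhat + xstar) (xhat - xstar)
    have htri : ‖xhat + xstar‖ ≤ ‖xhat‖ + ‖xstar‖ := norm_add_le _ _
    have habs : -⟪xhat + xstar, xhat - xstar⟫ ≤ |⟪xhat + xstar, xhat - xstar⟫| :=
      neg_le_abs _
    have hnn : (0:ℝ) ≤ ‖xhat - xstar‖ := norm_nonneg _
    nlinarith
  rw [div_eq_inv_mul, le_inv_mul_iff₀ (by linarith : (0:ℝ) < 2 * t)]
  calc 2 * t * ⟪c, xhat - xstar⟫ ≤ -⟪xhat + xstar, xhat - xstar⟫ := h1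
    _ ≤ (‖xhat‖ + ‖xstar‖) * ‖xhat - xstar‖ := h2
end

section
/- Let S ⊆ ℝⁿ be a nonempty compact convex set and c ∈ ℝⁿ. Let x̂_t = argmin_{x ∈ S} ½‖x + t c‖². As t → +∞, cᵀx̂_t converges to min_{x ∈ S} cᵀx. -/
open scoped RealInnerProductSpace
open Filter

theorem lp_projection_value_converges (n : ℕ)
    (S : Set (EuclideanSpace ℝ (Fin n))) (hne : S.Nonempty)
    (hcomp : IsCompact S) (hconv : Convex ℝ S)
    (c : EuclideanSpace ℝ (Fin n))
    (xhat : ℝ → EuclideanSpace ℝ (Fin n))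
    (hxhat : ∀ t > 0, xhat t ∈ S ∧
      ∀ x ∈ S, (1/2) * ‖xhat t + t • c‖^2 ≤ (1/2) * ‖x + t • c‖^2) :
    Tendsto (fun t => ⟪c, xhat t⟫) atTop
      (nhds (sInf ((fun x => ⟪c, x⟫) '' S))) := by
  have hcont : Continuous fun x : EuclideanSpace ℝ (Fin n) => ⟪c, x⟫ :=
    continuous_const.inner continuous_id
  obtain ⟨xs, hxsS, hxsmin⟩ := hcomp.exists_isMinOn hne hcont.continuousOn
  set m := sInf ((fun x => ⟪c, x⟫) '' S) with hm
  have hmem : (⟪c, xs⟫ : ℝ) ∈ (fun x => ⟪c, x⟫) '' S := ⟨xs, hxsS, rfl⟩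
  have hbdd : BddBelow ((fun x => ⟪c, x⟫) '' S) :=
    ⟨⟪c, xs⟫, by rintro _ ⟨y, hy, rfl⟩; exact hxsmin hy⟩
  have hmeq : m = ⟪c, xs⟫ := le_antisymm (csInf_le hbdd hmem)
    (le_csInf ⟨_, hmem⟩ (by rintro _ ⟨y, hy, rfl⟩; exact hxsmin hy))
  -- lower bound
  have hlow : ∀ᶠ t in atTop, m ≤ ⟪c, xhat t⟫ := by
    filter_upwards [eventually_gt_atTop (0:ℝ)] with t ht
    exact csInf_le hbdd ⟨xhat t, (hxhat t ht).1, rfl⟩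
  -- upper bound
  have hup : ∀ᶠ t in atTop, ⟪c, xhat t⟫ ≤ m + ‖xs‖^2 / (2 * t) := by
    filter_upwards [eventually_gt_atTop (0:ℝ)] with t ht
    have key := (hxhat t ht).2 xs hxsS
    have e1 : ‖xhat t + t • c‖^2 = ‖xhat t‖^2 + 2 * (t * ⟪c, xhat t⟫) + ‖t • c‖^2 := by
      rw [@norm_add_sq_real, real_inner_smul_right, real_inner_comm]
    have e2 : ‖xs + t • c‖^2 = ‖xs‖^2 + 2 * (t * ⟪c, xs⟫) + ‖t • c‖^2 := by
      rw [@norm_add_sq_real, real_inner_smul_right, real_inner_comm]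
    rw [e1, e2] at key
    have h0 : (0:ℝ) ≤ ‖xhat t‖^2 := sq_nonneg _
    have : t * ⟪c, xhat t⟫ ≤ t * ⟪c, xs⟫ + ‖xs‖^2 / 2 := by nlinarith
    rw [hmeq]
    have hdiv : ‖xs‖^2 / (2 * t) * t = ‖xs‖^2 / 2 := by field_simp
    nlinarith [this, hdiv, ht]
  -- squeeze
  have hconst : Tendsto (fun _ : ℝ => m) atTop (nhds m) := tendsto_const_nhds
  have hupf : Tendsto (fun t : ℝ => m + ‖xs‖^2 / (2 * t)) atTop (nhds m) := by
    have : Tendsto (fun t : ℝ => ‖xs‖^2 / (2 * t)) atTop (nhds 0) := by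
      apply Tendsto.div_atTop tendsto_const_nhds
      exact Tendsto.const_mul_atTop (by norm_num) tendsto_id
    simpa using hconst.add this
  exact tendsto_of_tendsto_of_tendsto_of_le_of_le' hconst hupf hlow hup
end

section
/- Let S ⊆ ℝⁿ be nonempty, compact and convex, and c ∈ ℝⁿ. If the linear program min_{x ∈ S} cᵀx has a unique minimizer x*, then the projections x̂_t = argmin_{x ∈ S} ½‖x + tc‖² converge to x* as t → +∞. -/
open scoped RealInnerProductSpace
open Filter

theorem lp_projection_converges_to_unique_min (n : ℕ)
    (S : Set (EuclideanSpace ℝ (Fin n))) (hne : S.Nonempty)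
    (hcomp : IsCompact S) (hconv : Convex ℝ S)
    (c : EuclideanSpace ℝ (Fin n))
    (xstar : EuclideanSpace ℝ (Fin n)) (hxstar : xstar ∈ S)
    (hmin : ∀ x ∈ S, ⟪c, xstar⟫ ≤ ⟪c, x⟫)
    (huniq : ∀ z ∈ S, (∀ x ∈ S, ⟪c, z⟫ ≤ ⟪c, x⟫) → z = xstar)
    (xhat : ℝ → EuclideanSpace ℝ (Fin n))
    (hxhat : ∀ t > 0, xhat t ∈ S ∧
      ∀ x ∈ S, (1/2) * ‖xhat t + t • c‖^2 ≤ (1/2) * ‖x + t • c‖^2) :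
    Tendsto xhat atTop (nhds xstar) := by
  -- key rearranged inequality
  have key : ∀ t > (0:ℝ), ∀ x ∈ S,
      ⟪c, xhat t⟫ + ‖xhat t‖^2 / (2*t) ≤ ⟪c, x⟫ + ‖x‖^2 / (2*t) := by
    intro t ht x hx
    have h := (hxhat t ht).2 x hx
    rw [norm_add_sq_real, norm_add_sq_real] at h
    rw [real_inner_smul_right, real_inner_smul_right, norm_smul] at h
    have h1 : ⟪xhat t, c⟫ = ⟪c, xhat t⟫ := real_inner_comm _ _
    have h2 : ⟪x, c⟫ = ⟪c, x⟫ := real_inner_comm _ _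
    rw [h1, h2] at h
    have h2t : (0:ℝ) < 2*t := by linarith
    rw [← sub_nonneg]
    have key2 : ⟪c, x⟫ + ‖x‖^2/(2*t) - (⟪c, xhat t⟫ + ‖xhat t‖^2/(2*t))
        = ((⟪c, x⟫ * (2*t) + ‖x‖^2) - (⟪c, xhat t⟫ * (2*t) + ‖xhat t‖^2))/(2*t) := by
      field_simp
    rw [key2]
    apply div_nonneg _ h2t.le
    nlinarith [h]
  -- boundedness of S
  obtain ⟨R, hR⟩ := hcomp.isBounded.subset_closedBall 0
  by_contra hnot
  rw [Metric.tendsto_atTop] at hnot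
  push_neg at hnot
  obtain ⟨ε, hε, hfreq⟩ := hnot
  choose u hu1 hu2 using fun k : ℕ => hfreq (max (k : ℝ) 1)
  have hupos : ∀ k, 0 < u k := fun k =>
    lt_of_lt_of_le one_pos ((le_max_right _ _).trans (hu1 k))
  have huS : ∀ k, xhat (u k) ∈ S := fun k => (hxhat _ (hupos k)).1
  obtain ⟨z, hzS, φ, hφ, hlim⟩ := hcomp.tendsto_subseq huS
  set s : ℕ → ℝ := fun k => u (φ k) with hs
  have hstop : Tendsto s atTop atTop := by
    apply tendsto_atTop_mono (fun k => ?_) tendsto_natCast_atTop_atTop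
    calc (k:ℝ) ≤ (φ k : ℝ) := Nat.cast_le.2 (hφ.id_le k)
      _ ≤ max (φ k : ℝ) 1 := le_max_left _ _
      _ ≤ u (φ k) := hu1 _
  have hzne : z ≠ xstar := by
    intro h
    have hd : Tendsto (fun k => dist (xhat (s k)) xstar) atTop (nhds (dist z xstar)) :=
      (hlim.dist tendsto_const_nhds)
    have : ε ≤ dist z xstar :=
      ge_of_tendsto hd (Eventually.of_forall fun k => hu2 (φ k))
    rw [h, dist_self] at this
    linarith
  -- z is a minimizer
  have hzmin : ∀ x ∈ S, ⟪c, z⟫ ≤ ⟪c, x⟫ := by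
    intro x hx
    have hA : Tendsto (fun k => ⟪c, xhat (s k)⟫ + ‖xhat (s k)‖^2 / (2 * s k))
        atTop (nhds (⟪c, z⟫ + 0)) := by
      apply Tendsto.add
      · exact (tendsto_const_nhds.inner hlim)
      · apply squeeze_zero (fun k => div_nonneg (by positivity) (by linarith [hupos (φ k)])) (g := fun k => R^2 / (2 * s k))
        · intro k
          have hb : ‖xhat (s k)‖ ≤ R := by
            have := hR (huS (φ k))
            simpa [Metric.mem_closedBall] using this
          have hspos : (0:ℝ) < s k := hupos (φ k)
          have hnum : ‖xhat (s k)‖^2 ≤ R^2 := by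
            nlinarith [norm_nonneg (xhat (s k))]
          gcongr
        · exact tendsto_const_nhds.div_atTop (hstop.const_mul_atTop two_pos)
    have hB : Tendsto (fun k => ⟪c, x⟫ + ‖x‖^2 / (2 * s k))
        atTop (nhds (⟪c, x⟫ + 0)) := by
      apply Tendsto.add tendsto_const_nhds
      exact tendsto_const_nhds.div_atTop (hstop.const_mul_atTop two_pos)
    have := le_of_tendsto_of_tendsto' hA hB
      (fun k => key (s k) (hupos (φ k)) x hx)
    simpa using this
  exact hzne (huniq z hzS hzmin)
end

section
/- Fix y ∈ ℝ ⁿ, u ≤ v, an m×n matrix A. Define φ(μ) ∈ ℝⁿ componentwise by φ(μ)ᵢ = clamp((y − Aᵀμ)ᵢ, uᵢ, vᵢ). If μ* ∈ ℝᵐ satisfies A·φ(μ*) = b, then φ(μ*) is the unique minimizer of ½‖x − y‖² over {x : u ≤ x ≤ v, Ax = b}. -/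
/-!
With `w = y - Aᵀ μ`, the point `φ(μ)` is the coordinatewise projection of `w` onto the box, so
`⟪z - φ(μ), φ(μ) - w⟫ ≥ 0` for every `z` in the box. For `z` with `A z = b = A φ(μ)` the
multiplier term `⟪z - φ(μ), Aᵀ μ⟫ = ⟪A (z - φ(μ)), μ⟫` vanishes, which leaves
`⟪z - φ(μ), φ(μ) - y⟫ ≥ 0`; expanding `‖z - y‖² = ‖(z - φ(μ)) + (φ(μ) - y)‖²` then shows that
`φ(μ)` is strictly closer to `y` than any other feasible `z`.
-/

open Matrix

theorem sq_norm_sub_lt_of_inner_nonneg {E : Type*} [NormedAddCommGroup E] [InnerProductSpace ℝ E]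
    {x y z : E} (h : 0 ≤ inner ℝ (z - x) (x - y)) (hzx : z ≠ x) :
    ‖x - y‖ ^ 2 < ‖z - y‖ ^ 2 := by
  have hpos : 0 < ‖z - x‖ := norm_pos_iff.2 (sub_ne_zero.2 hzx)
  calc ‖x - y‖ ^ 2 < ‖z - x‖ ^ 2 + 2 * inner ℝ (z - x) (x - y) + ‖x - y‖ ^ 2 := by
        nlinarith
    _ = ‖z - y‖ ^ 2 := by rw [← norm_add_sq_real, sub_add_sub_cancel]

theorem sub_mul_sub_min_max_nonneg {α : Type*} [Ring α] [LinearOrder α] [IsOrderedRing α]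
    {a b z w : α} (ha : a ≤ z) (hb : z ≤ b) :
    0 ≤ (z - min (max w a) b) * (min (max w a) b - w) := by
  rcases le_total w a with hwa | haw
  · rw [max_eq_right hwa, min_eq_left (ha.trans hb)]
    exact mul_nonneg (sub_nonneg.2 ha) (sub_nonneg.2 hwa)
  rcases le_total w b with hwb | hbw
  · rw [max_eq_left haw, min_eq_left hwb, sub_self, mul_zero]
  · rw [min_eq_right (hbw.trans (le_max_left w a))]
    exact mul_nonneg_of_nonpos_of_nonpos (sub_nonpos.2 hb) (sub_nonpos.2 hbw)

theorem dotProduct_transpose_mulVec_eq_zero {ι κ R : Type*} [Fintype ι] [Fintype κ] [CommRing R]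
    {A : Matrix κ ι R} {x : ι → R} (hx : A *ᵥ x = 0) (μ : κ → R) :
    x ⬝ᵥ (Aᵀ *ᵥ μ) = 0 := by
  rw [mulVec_transpose, dotProduct_comm, ← dotProduct_mulVec, hx, dotProduct_zero]

theorem dotProduct_sub_min_max_nonneg {ι κ : Type*} [Fintype ι] [Fintype κ]
    (A : Matrix κ ι ℝ) (μ : κ → ℝ) {u v y z φ : ι → ℝ}
    (hφ : ∀ i, φ i = min (max (y i - (Aᵀ *ᵥ μ) i) (u i)) (v i))
    (hz : ∀ i, u i ≤ z i ∧ z i ≤ v i) (hA : A *ᵥ z = A *ᵥ φ) :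
    0 ≤ (z - φ) ⬝ᵥ (φ - y) := by
  have hmult : (z - φ) ⬝ᵥ (Aᵀ *ᵥ μ) = 0 :=
    dotProduct_transpose_mulVec_eq_zero (by rw [mulVec_sub, hA, sub_self]) μ
  have hbox : 0 ≤ (z - φ) ⬝ᵥ (φ - (y - Aᵀ *ᵥ μ)) :=
    Finset.sum_nonneg fun i _ => by
      simpa only [Pi.sub_apply, hφ i] using sub_mul_sub_min_max_nonneg (w := y i - (Aᵀ *ᵥ μ) i)
        (hz i).1 (hz i).2
  calc 0 ≤ (z - φ) ⬝ᵥ (φ - (y - Aᵀ *ᵥ μ)) - (z - φ) ⬝ᵥ (Aᵀ *ᵥ μ) := by rw [hmult, sub_zero]; exact hbox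
    _ = (z - φ) ⬝ᵥ (φ - y) := by rw [← dotProduct_sub, sub_sub, sub_add_cancel]

theorem box_linear_projection_phi_general (n m : ℕ)
    (u v y : EuclideanSpace ℝ (Fin n)) (huv : ∀ i, u i ≤ v i)
    (A : Matrix (Fin m) (Fin n) ℝ) (b : Fin m → ℝ)
    (μ : Fin m → ℝ) (φμ : EuclideanSpace ℝ (Fin n))
    (hφ : ∀ i, φμ i = min (max (y i - A.transpose.mulVec μ i) (u i)) (v i))
    (hfeas : A.mulVec φμ = b) :
    ((∀ i, u i ≤ φμ i ∧ φμ i ≤ v i) ∧ A.mulVec φμ = b) ∧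
    ∀ z : EuclideanSpace ℝ (Fin n),
      ((∀ i, u i ≤ z i ∧ z i ≤ v i) ∧ A.mulVec z = b) → z ≠ φμ →
        (1/2) * ‖φμ - y‖^2 < (1/2) * ‖z - y‖^2 := by
  have hbox : ∀ i, u i ≤ φμ i ∧ φμ i ≤ v i := fun i => by
    rw [hφ i]
    exact ⟨le_min (le_max_right _ _) (huv i), min_le_right _ _⟩
  refine ⟨⟨hbox, hfeas⟩, fun z ⟨hz, hzA⟩ hzφ => ?_⟩
  have hinner : 0 ≤ inner ℝ (z - φμ) (φμ - y) := by
    rw [EuclideanSpace.inner_eq_star_dotProduct, star_trivial, dotProduct_comm]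
    exact dotProduct_sub_min_max_nonneg A μ hφ hz (hzA.trans hfeas.symm)
  have := sq_norm_sub_lt_of_inner_nonneg hinner hzφ
  linarith

theorem box_linear_projection_phi (n m : ℕ)
    (u v y : EuclideanSpace ℝ (Fin n)) (huv : ∀ i, u i ≤ v i)
    (A : Matrix (Fin m) (Fin n) ℝ) (b : Fin m → ℝ)
    (hne : {x : EuclideanSpace ℝ (Fin n) |
      (∀ i, u i ≤ x i ∧ x i ≤ v i) ∧ A.mulVec x = b}.Nonempty)
    (μ : Fin m → ℝ) (φμ : EuclideanSpace ℝ (Fin n))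
    (hφ : ∀ i, φμ i = min (max (y i - A.transpose.mulVec μ i) (u i)) (v i))
    (hfeas : A.mulVec φμ = b) :
    ((∀ i, u i ≤ φμ i ∧ φμ i ≤ v i) ∧ A.mulVec φμ = b) ∧
    ∀ z : EuclideanSpace ℝ (Fin n),
      ((∀ i, u i ≤ z i ∧ z i ≤ v i) ∧ A.mulVec z = b) → z ≠ φμ →
        (1/2) * ‖φμ - y‖^2 < (1/2) * ‖z - y‖^2 :=
  box_linear_projection_phi_general n m u v y huv A b μ φμ hφ hfeas
end

section
/- Let y ∈ ℝⁿ and define for μ ∈ ℝ the function h(μ) = ∑ᵢ max(yᵢ − μ, 0). If h(μ₁) = h(μ₂) = 1, then μ₁ = μ₂, since h is strictly monotone on the region where it is positive; hence the simplex projection x* is uniquely determined by the equation h(μ)=1. -/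
lemma simplex_aux (n : ℕ) (y : Fin n → ℝ) (a b : ℝ) (hab : a < b)
    (ha : ∑ i, max (y i - a) 0 = 1) (hb : ∑ i, max (y i - b) 0 = 1) : False := by
  -- each term at b ≤ term at a, sums equal, hence all terms equal
  have hle : ∀ i ∈ Finset.univ, max (y i - b) 0 ≤ max (y i - a) 0 := by
    intro i _
    exact max_le_max (by linarith) le_rfl
  have heq : ∀ i ∈ Finset.univ, max (y i - b) 0 = max (y i - a) 0 :=
    (Finset.sum_eq_sum_iff_of_le hle).mp (by rw [ha, hb])
  -- some term at b is positive
  have hpos : ∃ i, 0 < max (y i - b) 0 := by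
    by_contra h
    push_neg at h
    have : ∑ i, max (y i - b) 0 ≤ 0 := Finset.sum_nonpos (fun i _ => h i)
    linarith
  obtain ⟨i, hi⟩ := hpos
  have h1 : max (y i - b) 0 = y i - b := max_eq_left (by
    rcases le_or_gt (y i - b) 0 with h | h
    · simp [max_eq_right h] at hi
    · linarith)
  have h2 : max (y i - a) 0 = y i - a := max_eq_left (by have := max_eq_left_iff.mp h1; linarith)
  have := heq i (Finset.mem_univ i)
  rw [h1, h2] at this
  linarith

theorem simplex_projection_mu_unique (n : ℕ) (hn : 1 ≤ n) (y : Fin n → ℝ)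
    (μ₁ μ₂ : ℝ)
    (h₁ : ∑ i, max (y i - μ₁) 0 = 1) (h₂ : ∑ i, max (y i - μ₂) 0 = 1) :
    μ₁ = μ₂ ∧ (fun i => max (y i - μ₁) 0) = (fun i => max (y i - μ₂) 0) := by
  have h : μ₁ = μ₂ := by
    rcases lt_trichotomy μ₁ μ₂ with h | h | h
    · exact absurd (simplex_aux n y μ₁ μ₂ h h₁ h₂) id
    · exact h
    · exact absurd (simplex_aux n y μ₂ μ₁ h h₂ h₁) id
  exact ⟨h, by rw [h]⟩
end

section
/- Let S ⊆ ℝⁿ be nonempty compact convex, c ∈ ℝⁿ, and δ > 0. Set t = 4Rr/δ where R = max_{x∈S}‖x‖ and 2r ≥ diam(S) with R, r > 0. Then x̂_t = argmin_{x∈S} ½‖x + tc‖² satisfies cᵀx̂_t ≤ min_{x∈S} cᵀx + δ. -/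
open scoped RealInnerProductSpace

theorem choice_of_t_correct (n : ℕ)
    (S : Set (EuclideanSpace ℝ (Fin n))) (hne : S.Nonempty)
    (hcomp : IsCompact S) (hconv : Convex ℝ S)
    (c : EuclideanSpace ℝ (Fin n)) (δ : ℝ) (hδ : 0 < δ)
    (R r : ℝ) (hRpos : 0 < R) (hrpos : 0 < r)
    (hR : ∀ x ∈ S, ‖x‖ ≤ R) (hr : ∀ x ∈ S, ∀ x' ∈ S, ‖x - x'‖ ≤ 2 * r)
    (t : ℝ) (ht : t = 4 * R * r / δ)
    (xstar : EuclideanSpace ℝ (Fin n)) (hxstar : xstar ∈ S)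
    (hmin : ∀ x ∈ S, ⟪c, xstar⟫ ≤ ⟪c, x⟫)
    (xhat : EuclideanSpace ℝ (Fin n)) (hxhat : xhat ∈ S)
    (hproj : ∀ x ∈ S, (1/2) * ‖xhat + t • c‖^2 ≤ (1/2) * ‖x + t • c‖^2) :
    ⟪c, xhat⟫ ≤ ⟪c, xstar⟫ + δ := by
  have ht0 : 0 < t := by rw [ht]; positivity
  have key := hproj xstar hxstar
  rw [norm_add_sq_real, norm_add_sq_real, real_inner_smul_right,
    real_inner_smul_right, real_inner_comm c xhat, real_inner_comm c xstar] at key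
  have h1 : t * (⟪c, xhat⟫ - ⟪c, xstar⟫) ≤ (1/2) * (‖xstar‖^2 - ‖xhat‖^2) := by
    nlinarith [key]
  have h2 : ‖xstar‖ - ‖xhat‖ ≤ ‖xstar - xhat‖ := norm_sub_norm_le _ _
  have h3 := hr xstar hxstar xhat hxhat
  have hRs := hR xstar hxstar
  have hRh := hR xhat hxhat
  have hns : (0:ℝ) ≤ ‖xstar‖ := norm_nonneg _
  have hnh : (0:ℝ) ≤ ‖xhat‖ := norm_nonneg _
  have h4 : t * (⟪c, xhat⟫ - ⟪c, xstar⟫) ≤ 2 * R * r := by nlinarith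
  have htδ : t * δ = 4 * R * r := by rw [ht]; field_simp
  nlinarith [mul_pos ht0 hδ]
end
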